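/- arXiv:2505.00535 — 3 statements merged into one kernel-verified Lean document; each statement's English description precedes it below -/
import Mathlib

section
/- Let G and H be connected simple graphs, each of order at least two. Then the mobile general position number of the Cartesian product satisfies mob(G □ H) ≥ max{mob(G), mob(H)}. -/
/-!
Distances in `G □ H` add up coordinatewise. Hence a set of the form `{(v, σ v) | v ∈ S}`
is in general position in `G □ H` as soon as `S` is in general position in `G`: a betweenness
among three of its points projects to one in `G`. In particular the robots of `S × {w}` can
replay every legal move of `G` inside the layer `V × {w}`, and can be moved one at a time from a
layer to an adjacent one. As legal moves are reversible, a general position set is mobile as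
soon as every vertex lies in some configuration reachable from it, and walking the robots along
the layers of the connected graph `H` reaches every vertex of `G □ H`. The bound for `H` follows
through the distance-preserving swap `H □ G → G □ H`.
-/

open SimpleGraph

/-- `S` is a general position set of `G`: for all `u, v ∈ S`, every shortest `u,v`-path
contains no vertex of `S` other than `u` and `v`. -/
def IsGPSet {V : Type*} (G : SimpleGraph V) (S : Set V) : Prop :=
  ∀ u ∈ S, ∀ v ∈ S, ∀ p : G.Walk u v, p.IsPath → p.length = G.dist u v →
    ∀ w ∈ p.support, w ∈ S → w = u ∨ w = v

/-- A legal move from the configuration `S` to the configuration `T`: a robot at `u ∈ S`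
moves to an adjacent unoccupied vertex `v ∉ S` so that the resulting configuration
`(S \ {u}) ∪ {v}` is again a general position set. -/
def LegalMove {V : Type*} (G : SimpleGraph V) (S T : Set V) : Prop :=
  IsGPSet G S ∧ ∃ u ∈ S, ∃ v, v ∉ S ∧ G.Adj u v ∧
    T = insert v (S \ {u}) ∧ IsGPSet G T

/-- `S` is a mobile general position set: there is a finite sequence of configurations
`S = S_0, S_1, …, S_k`, each obtained from the previous one by a legal move, whose union
is the whole vertex set. -/
def IsMobileGPSet {V : Type*} (G : SimpleGraph V) (S : Set V) : Prop :=
  IsGPSet G S ∧ ∃ (k : ℕ) (f : ℕ → Set V), f 0 = S ∧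
    (∀ i < k, LegalMove G (f i) (f (i + 1))) ∧
    (⋃ i ∈ Set.Iic k, f i) = Set.univ

/-- The mobile general position number of `G`: the maximum cardinality of a mobile
general position set. -/
noncomputable def mob {V : Type*} (G : SimpleGraph V) : ℕ :=
  sSup {n | ∃ S : Set V, IsMobileGPSet G S ∧ S.ncard = n}

open Function Relation

section

variable {V V' W : Type*} {G : SimpleGraph V} {G' : SimpleGraph V'} {H : SimpleGraph W}
  {S T : Set V}

theorem isGPSet_iff_dist (hG : G.Connected) :
    IsGPSet G S ↔ ∀ u ∈ S, ∀ v ∈ S, ∀ w ∈ S,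
      G.dist u w + G.dist w v = G.dist u v → w = u ∨ w = v := by
  classical
  constructor
  · intro hS u hu v hv w hw hsum
    obtain ⟨p, hp⟩ := hG.exists_walk_length_eq_dist u w
    obtain ⟨q, hq⟩ := hG.exists_walk_length_eq_dist w v
    have hlen : (p.append q).length = G.dist u v := by
      rw [Walk.length_append, hp, hq, hsum]
    exact hS u hu v hv _ (Walk.isPath_of_length_eq_dist _ hlen) hlen w
      ((p.mem_support_append_iff q).mpr (.inl p.end_mem_support)) hw
  · intro hS u hu v hv p _ hp w hw hwS
    have hsplit := congrArg Walk.length (p.take_spec hw)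
    rw [Walk.length_append] at hsplit
    have := dist_le (p.takeUntil w hw)
    have := dist_le (p.dropUntil w hw)
    have := hG.dist_triangle (u := u) (v := w) (w := v)
    exact hS u hu v hv w hwS (by omega)

theorem SimpleGraph.dist_boxProd {x y : V × W} (hG : G.Reachable x.1 y.1)
    (hH : H.Reachable x.2 y.2) : (G □ H).dist x y = G.dist x.1 y.1 + H.dist x.2 y.2 := by
  rw [dist, dist, dist, edist_boxProd,
    ENat.toNat_add (edist_ne_top_iff_reachable.mpr hG) (edist_ne_top_iff_reachable.mpr hH)]

theorem IsGPSet.graphOn_boxProd (hG : G.Connected) (hH : H.Connected) (hS : IsGPSet G S)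
    (σ : V → W) : IsGPSet (G □ H) (S.graphOn σ) := by
  rw [isGPSet_iff_dist hG] at hS
  rw [isGPSet_iff_dist (hG.boxProd hH)]
  rintro _ ⟨u, hu, rfl⟩ _ ⟨v, hv, rfl⟩ _ ⟨w, hw, rfl⟩ hsum
  simp only [dist_boxProd (hG _ _) (hH _ _)] at hsum
  have := hG.dist_triangle (u := u) (v := w) (w := v)
  have := hH.dist_triangle (u := σ u) (v := σ w) (w := σ v)
  rcases hS u hu v hv w hw (by omega) with rfl | rfl <;> simp

theorem IsGPSet.image_of_dist_eq (hG : G.Connected) (hG' : G'.Connected) {f : V → V'}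
    (hf : ∀ x y, G'.dist (f x) (f y) = G.dist x y) (hS : IsGPSet G S) :
    IsGPSet G' (f '' S) := by
  rw [isGPSet_iff_dist hG] at hS
  rw [isGPSet_iff_dist hG']
  rintro _ ⟨u, hu, rfl⟩ _ ⟨v, hv, rfl⟩ _ ⟨w, hw, rfl⟩ hsum
  simp only [hf] at hsum
  rcases hS u hu v hv w hw hsum with rfl | rfl <;> simp

theorem injective_of_dist_eq (hG : G.Connected) {f : V → V'}
    (hf : ∀ x y, G'.dist (f x) (f y) = G.dist x y) : Injective f := fun x y hxy => by
  rw [← hG.dist_eq_zero_iff, ← hf, hxy, dist_self]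

theorem LegalMove.symm (h : LegalMove G S T) : LegalMove G T S := by
  obtain ⟨hS, u, hu, v, hv, hadj, rfl, hT⟩ := h
  refine ⟨hT, v, Set.mem_insert _ _, u, fun hu' => ?_, hadj.symm, ?_, hS⟩
  · rcases hu' with rfl | ⟨-, hne⟩
    exacts [hv hu, hne rfl]
  · ext x
    by_cases hxu : x = u
    · subst hxu; simp [hu, hadj.ne]
    · by_cases hxv : x = v
      · subst hxv; simp [hv, hxu]
      · simp [hxu, hxv]

theorem LegalMove.image {f : V → V'} (hf : Injective f)
    (hadj : ∀ a b, G.Adj a b → G'.Adj (f a) (f b))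
    (hgp : ∀ S, IsGPSet G S → IsGPSet G' (f '' S)) (h : LegalMove G S T) :
    LegalMove G' (f '' S) (f '' T) := by
  obtain ⟨hS, u, hu, v, hv, huv, rfl, hT⟩ := h
  refine ⟨hgp S hS, f u, Set.mem_image_of_mem f hu, f v, ?_, hadj u v huv, ?_, hgp _ hT⟩
  · rwa [hf.mem_set_image]
  · rw [Set.image_insert_eq, Set.image_sdiff hf, Set.image_singleton]

theorem LegalMove.graphOn_const_boxProd (hG : G.Connected) (hH : H.Connected)
    (h : LegalMove G S T) (w : W) :
    LegalMove (G □ H) (S.graphOn fun _ => w) (T.graphOn fun _ => w) :=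
  h.image (f := fun v => (v, w)) (Prod.mk_left_injective w)
    (fun _ _ hadj => boxProd_adj_left.mpr hadj) (fun _ hS => hS.graphOn_boxProd hG hH _)

theorem legalMove_graphOn_update (hG : G.Connected) (hH : H.Connected) (hS : IsGPSet G S)
    [DecidableEq V] {σ : V → W} {u : V} {w : W} (hu : u ∈ S) (hadj : H.Adj (σ u) w) :
    LegalMove (G □ H) (S.graphOn σ) (S.graphOn (update σ u w)) := by
  refine ⟨hS.graphOn_boxProd hG hH σ, (u, σ u), ⟨u, hu, rfl⟩, (u, w), ?_,
    boxProd_adj_right.mpr hadj, ?_, hS.graphOn_boxProd hG hH _⟩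
  · simpa using fun _ => hadj.ne
  · ext ⟨a, b⟩
    by_cases hau : a = u
    · subst hau
      simp [hu, eq_comm]
    · simp [hau]

def LegalMoveSeq (G : SimpleGraph V) (S T U : Set V) : Prop :=
  ∃ (k : ℕ) (f : ℕ → Set V), f 0 = S ∧ f k = T ∧
    (∀ i < k, LegalMove G (f i) (f (i + 1))) ∧ (⋃ i ∈ Set.Iic k, f i) = U

namespace LegalMoveSeq

variable {U : Set V}

theorem refl (S : Set V) : LegalMoveSeq G S S S :=
  ⟨0, fun _ => S, rfl, rfl, by simp, by simp⟩

theorem subset (h : LegalMoveSeq G S T U) : T ⊆ U := by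
  obtain ⟨k, f, -, rfl, -, rfl⟩ := h
  exact Set.subset_biUnion_of_mem (u := f) Set.self_mem_Iic

theorem tail {T' : Set V} (h : LegalMoveSeq G S T U) (hT : LegalMove G T T') :
    LegalMoveSeq G S T' (U ∪ T') := by
  obtain ⟨k, f, rfl, rfl, hf, rfl⟩ := h
  refine ⟨k + 1, update f (k + 1) T', by simp, by simp, fun i hi => ?_, ?_⟩
  · rcases Nat.lt_succ_iff_lt_or_eq.mp hi with hi | rfl
    · rw [update_of_ne (by omega), update_of_ne (by omega)]
      exact hf i hi
    · rwa [update_of_ne (by omega), update_self]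
  · rw [← Order.succ_eq_add_one, Order.Iic_succ, Set.biUnion_insert, Order.succ_eq_add_one,
      update_self, Set.union_comm]
    congr 1
    refine Set.iUnion₂_congr fun i hi => update_of_ne ?_ _ _
    exact (Nat.lt_succ_of_le hi).ne

theorem extend {T' : Set V} (h : LegalMoveSeq G S T U) (hT : ReflTransGen (LegalMove G) T T') :
    ∃ U', U ⊆ U' ∧ T' ⊆ U' ∧ LegalMoveSeq G S T' U' := by
  induction hT with
  | refl => exact ⟨U, le_rfl, h.subset, h⟩
  | tail _ hmove ih =>
    obtain ⟨U', hUU', -, h'⟩ := ih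
    exact ⟨_, hUU'.trans Set.subset_union_left, Set.subset_union_right, h'.tail hmove⟩

end LegalMoveSeq

theorem IsMobileGPSet.exists_reflTransGen_mem (h : IsMobileGPSet G S) (v : V) :
    ∃ T, ReflTransGen (LegalMove G) S T ∧ v ∈ T := by
  obtain ⟨-, k, f, rfl, hf, hcov⟩ := h
  have hreach : ∀ i ≤ k, ReflTransGen (LegalMove G) (f 0) (f i) := by
    intro i hi
    induction i with
    | zero => rfl
    | succ i ih => exact (ih (by omega)).tail (hf i (by omega))
  obtain ⟨i, hi, hv⟩ := Set.mem_iUnion₂.mp (hcov ▸ Set.mem_univ v)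
  exact ⟨f i, hreach i hi, hv⟩

theorem isMobileGPSet_of_forall_exists_reflTransGen_mem [Finite V] (hS : IsGPSet G S)
    (h : ∀ v, ∃ T, ReflTransGen (LegalMove G) S T ∧ v ∈ T) : IsMobileGPSet G S := by
  have hcover : ∀ A : Set V, A.Finite → ∃ U, A ⊆ U ∧ LegalMoveSeq G S S U := by
    intro A hA
    induction A, hA using Set.Finite.induction_on with
    | empty => exact ⟨S, Set.empty_subset _, .refl S⟩
    | @insert v A _ _ ih =>
      obtain ⟨U, hAU, hseq⟩ := ih
      obtain ⟨T, hST, hvT⟩ := h v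
      obtain ⟨U₁, hUU₁, hTU₁, hseq₁⟩ := hseq.extend hST
      obtain ⟨U₂, hU₁U₂, -, hseq₂⟩ :=
        hseq₁.extend (ReflTransGen.mono (fun _ _ => LegalMove.symm) _ _ (hST.swap _ _))
      exact ⟨U₂, Set.insert_subset (hU₁U₂ (hTU₁ hvT)) ((hAU.trans hUU₁).trans hU₁U₂), hseq₂⟩
  obtain ⟨U, hU, k, f, hf0, -, hf, rfl⟩ := hcover Set.univ Set.finite_univ
  exact ⟨hS, k, f, hf0, hf, Set.univ_subset_iff.mp hU⟩

theorem reflTransGen_legalMove_graphOn_of_adj (hG : G.Connected) (hH : H.Connected)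
    (hS : IsGPSet G S) (hfin : S.Finite) {w w' : W} (hadj : H.Adj w w') :
    ReflTransGen (LegalMove (G □ H)) (S.graphOn fun _ => w) (S.graphOn fun _ => w') := by
  classical
  have hmigrate : ReflTransGen (LegalMove (G □ H)) (S.graphOn fun _ => w)
      (S.graphOn (S.piecewise (fun _ => w') fun _ => w)) := by
    refine Set.Finite.induction_on_subset (motive := fun B _ => ReflTransGen (LegalMove (G □ H))
      (S.graphOn fun _ => w) (S.graphOn (B.piecewise (fun _ => w') fun _ => w))) S hfin
      (by simp only [Set.piecewise_empty]; rfl) fun {u B} hu _ huB ih => ?_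
    rw [Set.piecewise_insert]
    refine ih.tail (legalMove_graphOn_update hG hH hS hu ?_)
    rwa [Set.piecewise_eq_of_notMem _ _ _ huB]
  rwa [Set.graphOn_inj.mpr (Set.piecewise_eqOn _ _ _)] at hmigrate

theorem reflTransGen_legalMove_graphOn (hG : G.Connected) (hH : H.Connected)
    (hS : IsGPSet G S) (hfin : S.Finite) (w w' : W) :
    ReflTransGen (LegalMove (G □ H)) (S.graphOn fun _ => w) (S.graphOn fun _ => w') :=
  ReflTransGen.lift' (fun w => S.graphOn fun _ => w)
    (fun _ _ hadj => reflTransGen_legalMove_graphOn_of_adj hG hH hS hfin hadj) _ _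
    ((reachable_iff_reflTransGen w w').mp (hH w w'))

theorem mob_le_mob_of_forall [Finite V']
    (h : ∀ S, IsMobileGPSet G S → ∃ T, IsMobileGPSet G' T ∧ T.ncard = S.ncard) :
    mob G ≤ mob G' := by
  refine csSup_le' ?_
  rintro _ ⟨S, hS, rfl⟩
  obtain ⟨T, hT, hTS⟩ := h S hS
  exact le_csSup ⟨Nat.card V', by rintro _ ⟨T, -, rfl⟩; exact T.ncard_le_card⟩ ⟨T, hT, hTS⟩

theorem mob_le_mob_of_dist_eq [Finite V'] (hG : G.Connected) (hG' : G'.Connected)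
    {f : V → V'} (hf : ∀ x y, G'.dist (f x) (f y) = G.dist x y) (hsurj : Surjective f) :
    mob G ≤ mob G' := by
  have hinj := injective_of_dist_eq hG hf
  have hadj : ∀ a b, G.Adj a b → G'.Adj (f a) (f b) := fun a b hab =>
    dist_eq_one_iff_adj.mp ((hf a b).trans (dist_eq_one_iff_adj.mpr hab))
  have hgp : ∀ S, IsGPSet G S → IsGPSet G' (f '' S) := fun _ hS => hS.image_of_dist_eq hG hG' hf
  refine mob_le_mob_of_forall fun S hS => ⟨f '' S, ?_, S.ncard_image_of_injective hinj⟩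
  refine isMobileGPSet_of_forall_exists_reflTransGen_mem (hgp S hS.1) fun v' => ?_
  obtain ⟨v, rfl⟩ := hsurj v'
  obtain ⟨T, hST, hv⟩ := hS.exists_reflTransGen_mem v
  exact ⟨f '' T, ReflTransGen.lift (f '' ·) (fun _ _ => LegalMove.image hinj hadj hgp) _ _ hST,
    ⟨v, hv, rfl⟩⟩

theorem mob_le_mob_boxProd [Finite V] [Finite W] (hG : G.Connected) (hH : H.Connected) :
    mob G ≤ mob (G □ H) := by
  obtain ⟨w₀⟩ := hH.nonempty
  refine mob_le_mob_of_forall fun S hS => ⟨S.graphOn fun _ => w₀, ?_, Set.ncard_graphOn _ _⟩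
  refine isMobileGPSet_of_forall_exists_reflTransGen_mem (hS.1.graphOn_boxProd hG hH _) ?_
  rintro ⟨v, w⟩
  obtain ⟨T, hST, hv⟩ := hS.exists_reflTransGen_mem v
  refine ⟨T.graphOn fun _ => w, ?_, ⟨v, hv, rfl⟩⟩
  exact (reflTransGen_legalMove_graphOn hG hH hS.1 S.toFinite w₀ w).trans
    (ReflTransGen.lift _ (fun _ _ hmove => hmove.graphOn_const_boxProd hG hH w) _ _ hST)

end

theorem mob_boxProd_ge_max_mob_general {V W : Type*} [Finite V] [Finite W]
    (G : SimpleGraph V) (H : SimpleGraph W)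
    (hG : G.Connected) (hH : H.Connected) :
    max (mob G) (mob H) ≤ mob (G □ H) := by
  refine max_le (mob_le_mob_boxProd hG hH) ((mob_le_mob_boxProd hH hG).trans ?_)
  refine mob_le_mob_of_dist_eq (hH.boxProd hG) (hG.boxProd hH) (f := Prod.swap)
    (fun x y => ?_) Prod.swap_surjective
  rw [dist_boxProd (hG _ _) (hH _ _), dist_boxProd (hH _ _) (hG _ _)]
  exact add_comm _ _

theorem mob_boxProd_ge_max_mob {V W : Type*} [Finite V] [Finite W]
    (G : SimpleGraph V) (H : SimpleGraph W)
    (hG : G.Connected) (hH : H.Connected)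
    (hV : 2 ≤ Nat.card V) (hW : 2 ≤ Nat.card W) :
    max (mob G) (mob H) ≤ mob (G □ H) :=
  mob_boxProd_ge_max_mob_general G H hG hH
end

section
/- For all integers r, s ≥ 2, the mobile general position number of the Cartesian product of the complete graph K_r and the path P_s equals r, i.e., mob(K_r □ P_s) = r. -/
open SimpleGraph

/-! Write the vertices of `K_r □ P_s` as pairs `(i, j)` and call `{i} × P_s` a fiber; the
distance between `(i, j)` and `(i', j')` is `|j - j'|`, plus `1` when `i ≠ i'`. Hence a set
meeting every fiber at most once is in general position, and `r` robots sliding through the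
vertices in the order `i + r j` form a mobile general position set.

Conversely, if a general position set has more than `r` vertices, some fiber `i` holds two of
them, at columns `j₁` and `j₂`; every other vertex lies in another fiber, strictly between
columns `j₁` and `j₂`, and every fiber is met. A robot at an end of the doubled fiber cannot
leave it, so the fiber `i` stays doubled along any sequence of legal moves, and no robot ever
reaches column `0` outside fiber `i`. -/

namespace SimpleGraph

variable {V : Type*} {G : SimpleGraph V} {u v w : V}

lemma Walk.dist_add_dist_eq_of_length_eq_dist {p : G.Walk u v} (hp : p.length = G.dist u v)
    (hw : w ∈ p.support) : G.dist u w + G.dist w v = G.dist u v := by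
  classical
  have hsplit := congrArg Walk.length (p.take_spec hw)
  rw [Walk.length_append] at hsplit
  have h₁ := G.dist_le (p.takeUntil w hw)
  have h₂ := G.dist_le (p.dropUntil w hw)
  have h₃ := (p.dropUntil w hw).reachable.dist_triangle_right u
  omega

lemma Reachable.exists_isPath_of_dist_add_dist_eq (huw : G.Reachable u w)
    (hwv : G.Reachable w v) (h : G.dist u w + G.dist w v = G.dist u v) :
    ∃ p : G.Walk u v, p.IsPath ∧ p.length = G.dist u v ∧ w ∈ p.support := by
  obtain ⟨p₁, hp₁⟩ := huw.exists_walk_length_eq_dist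
  obtain ⟨p₂, hp₂⟩ := hwv.exists_walk_length_eq_dist
  have hlen : (p₁.append p₂).length = G.dist u v := by rw [Walk.length_append, hp₁, hp₂, h]
  exact ⟨p₁.append p₂, (p₁.append p₂).isPath_of_length_eq_dist hlen, hlen,
    (Walk.mem_support_append_iff _ _).2 (Or.inl p₁.end_mem_support)⟩

lemma Reachable.dist_boxProd {W : Type*} {H : SimpleGraph W} {x y : V × W}
    (h₁ : G.Reachable x.1 y.1) (h₂ : H.Reachable x.2 y.2) :
    (G □ H).dist x y = G.dist x.1 y.1 + H.dist x.2 y.2 := by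
  have h : (G □ H).Reachable x y := reachable_boxProd.2 ⟨h₁, h₂⟩
  rw [← Nat.cast_inj (R := ℕ∞), Nat.cast_add, h.coe_dist_eq_edist, h₁.coe_dist_eq_edist,
    h₂.coe_dist_eq_edist, edist_boxProd]

lemma dist_pathGraph {n : ℕ} (u v : Fin n) : (pathGraph n).dist u v = Nat.dist u v := by
  have dist_le_length : ∀ {u v : Fin n} (p : (pathGraph n).Walk u v), Nat.dist u v ≤ p.length := by
    intro u v p
    induction p with
    | nil => simp
    | cons h p ih =>
      rw [pathGraph_adj] at h
      simp only [Nat.dist, Walk.length_cons] at *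
      omega
  have dist_le : ∀ (k : ℕ) (u v : Fin n), (u : ℕ) + k = v → (pathGraph n).dist u v ≤ k := by
    intro k
    induction k with
    | zero => intro u v h; simp [Fin.ext (by omega : (u : ℕ) = v)]
    | succ k ih =>
      intro u v h
      have hadj : (pathGraph n).Adj u ⟨u + 1, by omega⟩ := pathGraph_adj.2 (Or.inl rfl)
      have := hadj.reachable.dist_triangle_left v
      rw [dist_eq_one_iff_adj.2 hadj] at this
      have := ih ⟨u + 1, by omega⟩ v (by simp only; omega)
      omega
  obtain ⟨p, hp⟩ := (pathGraph_preconnected n u v).exists_walk_length_eq_dist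
  refine le_antisymm ?_ (hp ▸ dist_le_length p)
  rcases le_total (u : ℕ) v with huv | hvu
  · have := dist_le (v - u) u v (by omega)
    simp only [Nat.dist]
    omega
  · have := dist_le (u - v) v u (by omega)
    rw [dist_comm]
    simp only [Nat.dist]
    omega

end SimpleGraph

open SimpleGraph

lemma isGPSet_iff_dist_add_dist_eq {V : Type*} {G : SimpleGraph V} (hG : G.Preconnected)
    {S : Set V} : IsGPSet G S ↔
      ∀ u ∈ S, ∀ v ∈ S, ∀ w ∈ S, G.dist u w + G.dist w v = G.dist u v → w = u ∨ w = v := by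
  constructor
  · intro hS u hu v hv w hw h
    obtain ⟨p, hp, hlen, hwp⟩ := (hG u w).exists_isPath_of_dist_add_dist_eq (hG w v) h
    exact hS u hu v hv p hp hlen w hwp hw
  · intro h u hu v hv p _ hlen w hwp hw
    exact h u hu v hv w hw (p.dist_add_dist_eq_of_length_eq_dist hlen hwp)

lemma LegalMove.ncard_eq {V : Type*} {G : SimpleGraph V} {S T : Set V} (h : LegalMove G S T) :
    T.ncard = S.ncard := by
  obtain ⟨-, u, hu, v, hv, -, rfl, -⟩ := h
  exact Set.ncard_exchange hv hu

lemma IsMobileGPSet.exists_mem_of_invariant {V : Type*} {G : SimpleGraph V} {S : Set V}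
    (hS : IsMobileGPSet G S) (P : Set V → Prop) (h₀ : P S)
    (hP : ∀ T T', P T → LegalMove G T T' → P T') (v : V) : ∃ T, P T ∧ v ∈ T := by
  obtain ⟨-, k, f, rfl, hmoves, hcover⟩ := hS
  have hf : ∀ i ≤ k, P (f i) := by
    intro i
    induction i with
    | zero => exact fun _ => h₀
    | succ i ih => exact fun hi => hP _ _ (ih (by omega)) (hmoves i (by omega))
  obtain ⟨i, hi, hv⟩ := Set.mem_iUnion₂.1 (hcover ▸ Set.mem_univ v)
  exact ⟨f i, hf i hi, hv⟩

lemma mob_eq_of_isMobileGPSet {V : Type*} {G : SimpleGraph V} {S : Set V}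
    (hS : IsMobileGPSet G S) (hle : ∀ T, IsMobileGPSet G T → T.ncard ≤ S.ncard) :
    mob G = S.ncard :=
  IsGreatest.csSup_eq ⟨⟨S, hS, rfl⟩, by rintro _ ⟨T, hT, rfl⟩; exact hle T hT⟩

namespace CompleteBoxPath

section

variable {α : Type*} {s : ℕ}

local notation "Γ" => SimpleGraph.boxProd (⊤ : SimpleGraph α) (pathGraph s)

lemma preconnected : (Γ).Preconnected :=
  preconnected_top.boxProd (pathGraph_preconnected s)

lemma dist_mk_same (a : α) (c d : Fin s) : (Γ).dist (a, c) (a, d) = Nat.dist c d := by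
  rw [Reachable.dist_boxProd (preconnected_top _ _) (pathGraph_preconnected _ _ _),
    dist_self, dist_pathGraph, zero_add]

lemma dist_mk_of_ne {a b : α} (h : a ≠ b) (c d : Fin s) :
    (Γ).dist (a, c) (b, d) = Nat.dist c d + 1 := by
  rw [Reachable.dist_boxProd (preconnected_top _ _) (pathGraph_preconnected _ _ _),
    dist_top_of_ne h, dist_pathGraph, add_comm]

lemma isGPSet_of_injOn_fst {S : Set (α × Fin s)} (hS : Set.InjOn Prod.fst S) : IsGPSet Γ S := by
  refine (isGPSet_iff_dist_add_dist_eq preconnected).2 ?_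
  rintro ⟨a, c⟩ hu ⟨b, d⟩ hv ⟨e, f⟩ hw h
  by_contra! hne
  have hea : e ≠ a := fun h => hne.1 (hS hw hu h)
  have heb : e ≠ b := fun h => hne.2 (hS hw hv h)
  rw [dist_mk_of_ne hea.symm, dist_mk_of_ne heb] at h
  by_cases hab : a = b
  · rw [hab, dist_mk_same] at h
    simp only [Nat.dist] at h
    omega
  · rw [dist_mk_of_ne hab] at h
    simp only [Nat.dist] at h
    omega

section GPSet

variable {S : Set (α × Fin s)} {i b : α} {j₁ j₂ m : Fin s}

lemma mem_uIoo_of_fst_ne (hS : IsGPSet Γ S) (h₁ : (i, j₁) ∈ S) (h₂ : (i, j₂) ∈ S)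
    (hj : j₁ ≠ j₂) (hm : (b, m) ∈ S) (hb : b ≠ i) : m ∈ Set.uIoo j₁ j₂ := by
  wlog hlt : j₁ < j₂ generalizing j₁ j₂
  · rw [Set.uIoo_comm]
    exact this h₂ h₁ hj.symm (hj.symm.lt_of_le (not_lt.1 hlt))
  have between := (isGPSet_iff_dist_add_dist_eq preconnected).1 hS
  rw [Set.uIoo_of_le hlt.le]
  constructor
  · by_contra! hmj
    have := between _ hm _ h₂ _ h₁ (by
      rw [dist_mk_of_ne hb, dist_mk_of_ne hb, dist_mk_same]
      simp only [Nat.dist]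
      omega)
    simp [Prod.ext_iff, hj, hb.symm] at this
  · by_contra! hmj
    have := between _ h₁ _ hm _ h₂ (by
      rw [dist_mk_of_ne hb.symm, dist_mk_of_ne hb.symm, dist_mk_same]
      simp only [Nat.dist]
      omega)
    simp [Prod.ext_iff, hj.symm, hb.symm] at this

lemma eq_or_eq_of_mem_fiber (hS : IsGPSet Γ S) (h₁ : (i, j₁) ∈ S) (h₂ : (i, j₂) ∈ S)
    (hj : j₁ ≠ j₂) (hm : (i, m) ∈ S) : m = j₁ ∨ m = j₂ := by
  have no_between : ∀ {a c d : Fin s}, (i, a) ∈ S → (i, c) ∈ S → (i, d) ∈ S →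
      c ∈ Set.uIoo a d → False := by
    intro a c d ha hc hd hbetween
    simp only [Set.uIoo, Set.mem_Ioo, inf_lt_iff, lt_sup_iff] at hbetween
    have := (isGPSet_iff_dist_add_dist_eq preconnected).1 hS _ ha _ hd _ hc (by
      simp only [dist_mk_same, Nat.dist]
      omega)
    simp only [Prod.mk.injEq, true_and] at this
    omega
  by_contra! hne
  have : m ∈ Set.uIoo j₁ j₂ ∨ j₁ ∈ Set.uIoo m j₂ ∨ j₂ ∈ Set.uIoo j₁ m := by
    simp only [Set.uIoo, Set.mem_Ioo, inf_lt_iff, lt_sup_iff]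
    omega
  rcases this with h | h | h
  exacts [no_between h₁ hm h₂ h, no_between hm h₁ h₂ h, no_between h₁ h₂ hm h]

lemma injOn_fst_diff (hS : IsGPSet Γ S) (h₁ : (i, j₁) ∈ S) (h₂ : (i, j₂) ∈ S)
    (hj : j₁ ≠ j₂) : Set.InjOn Prod.fst (S \ {(i, j₂)}) := by
  rintro ⟨a, c⟩ ⟨hx, hx₂⟩ ⟨b, d⟩ ⟨hy, hy₂⟩ (rfl : a = b)
  by_cases ha : a = i
  · subst ha
    have hc := (eq_or_eq_of_mem_fiber hS h₁ h₂ hj hx).resolve_right (by simpa using hx₂)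
    have hd := (eq_or_eq_of_mem_fiber hS h₁ h₂ hj hy).resolve_right (by simpa using hy₂)
    rw [hc, hd]
  · by_contra hne
    have hcd : c ≠ d := fun h => hne (by rw [h])
    have hc := mem_uIoo_of_fst_ne hS h₁ h₂ hj hx ha
    have hd := mem_uIoo_of_fst_ne hS h₁ h₂ hj hy ha
    have hj₁ := mem_uIoo_of_fst_ne hS hx hy hcd h₁ (Ne.symm ha)
    simp only [Set.uIoo, Set.mem_Ioo, inf_lt_iff, lt_sup_iff] at hc hd hj₁
    omega

lemma exists_mem_fiber [Finite α] (hS : IsGPSet Γ S) (hcard : Nat.card α < S.ncard)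
    (h₁ : (i, j₁) ∈ S) (h₂ : (i, j₂) ∈ S) (hj : j₁ ≠ j₂) (b : α) : ∃ m, (b, m) ∈ S := by
  have hinj := injOn_fst_diff hS h₁ h₂ hj
  have himage : Prod.fst '' (S \ {(i, j₂)}) = Set.univ := by
    refine Set.eq_of_subset_of_ncard_le (Set.subset_univ _) ?_ Set.finite_univ
    rw [hinj.ncard_image, Set.ncard_sdiff_singleton_of_mem h₂, Set.ncard_univ]
    omega
  obtain ⟨⟨b', m⟩, hm, rfl⟩ := himage.symm ▸ Set.mem_univ b
  exact ⟨m, hm.1⟩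

/-- The fiber `b` entered by the robot would become doubled, at column `c` and at the column `m`
of its old robot, with `m` strictly between `c` and `c'`; but then the robot left behind at
`(i, c')` would have to lie strictly between `c` and `m`. -/
lemma not_isGPSet_exchange_of_fst_ne [Finite α] (hS : IsGPSet Γ S)
    (hcard : Nat.card α < S.ncard) {c c' : Fin s} (hc : (i, c) ∈ S) (hc' : (i, c') ∈ S)
    (hcc' : c ≠ c') (hb : b ≠ i) : ¬ IsGPSet Γ (insert (b, c) (S \ {(i, c)})) := by
  intro hT
  obtain ⟨m, hm⟩ := exists_mem_fiber hS hcard hc hc' hcc' b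
  have hmS := mem_uIoo_of_fst_ne hS hc hc' hcc' hm hb
  have hmc : c ≠ m := by
    rintro rfl
    simp only [Set.uIoo, Set.mem_Ioo, inf_lt_iff, lt_sup_iff] at hmS
    omega
  have hc'T := mem_uIoo_of_fst_ne hT (Set.mem_insert _ _) (Set.mem_insert_of_mem _ ⟨hm, by simp [hb]⟩) hmc
    (Set.mem_insert_of_mem _ ⟨hc', by simp [hcc'.symm]⟩) hb.symm
  simp only [Set.uIoo, Set.mem_Ioo, inf_lt_iff, lt_sup_iff] at hmS hc'T
  omega

lemma exists_two_mem_fiber_of_legalMove [Finite α] {T : Set (α × Fin s)}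
    (h : LegalMove Γ S T) (hcard : Nat.card α < S.ncard) (h₁ : (i, j₁) ∈ S) (h₂ : (i, j₂) ∈ S)
    (hj : j₁ ≠ j₂) : ∃ d₁ d₂, d₁ ≠ d₂ ∧ (i, d₁) ∈ T ∧ (i, d₂) ∈ T := by
  obtain ⟨hS, ⟨a, c⟩, hu, ⟨b, d⟩, hv, hadj, rfl, hT⟩ := h
  by_cases ha : a = i
  · subst ha
    obtain ⟨c', hc', hcc'⟩ : ∃ c', (a, c') ∈ S ∧ c ≠ c' := by
      by_cases hc : c = j₁
      · exact ⟨j₂, h₂, hc ▸ hj⟩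
      · exact ⟨j₁, h₁, hc⟩
    have hc'T : (a, c') ∈ insert (b, d) (S \ {(a, c)}) :=
      Set.mem_insert_of_mem _ ⟨hc', by simp [hcc'.symm]⟩
    rcases boxProd_adj.1 hadj with ⟨hab, rfl⟩ | ⟨-, rfl⟩
    · exact (not_isGPSet_exchange_of_fst_ne hS hcard hu hc' hcc' ((top_adj _ _).1 hab).symm hT).elim
    · exact ⟨d, c', fun hdc => hv (hdc ▸ hc'), Set.mem_insert _ _, hc'T⟩
  · refine ⟨j₁, j₂, hj, Set.mem_insert_of_mem _ ⟨h₁, ?_⟩, Set.mem_insert_of_mem _ ⟨h₂, ?_⟩⟩ <;>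
      simp [Ne.symm ha]

end GPSet

lemma ncard_le_of_isMobileGPSet [Finite α] [Nontrivial α] (hs : 0 < s) {S : Set (α × Fin s)}
    (hS : IsMobileGPSet Γ S) : S.ncard ≤ Nat.card α := by
  by_contra! hcard
  obtain ⟨⟨i, j₁⟩, h₁, ⟨i', j₂⟩, h₂, hne, rfl : i = i'⟩ :=
    Set.exists_ne_map_eq_of_ncard_lt_of_maps_to (t := Set.univ) (by rwa [Set.ncard_univ])
      (f := Prod.fst) (fun _ _ => Set.mem_univ _) Set.finite_univ
  have hj : j₁ ≠ j₂ := fun h => hne (by rw [h])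
  let P : Set (α × Fin s) → Prop := fun T => IsGPSet Γ T ∧ T.ncard = S.ncard ∧
    ∃ d₁ d₂, d₁ ≠ d₂ ∧ (i, d₁) ∈ T ∧ (i, d₂) ∈ T
  have hP : ∀ T T', P T → LegalMove Γ T T' → P T' := by
    rintro T T' ⟨-, hTcard, d₁, d₂, hd, hd₁, hd₂⟩ hmove
    refine ⟨?_, hmove.ncard_eq.trans hTcard,
      exists_two_mem_fiber_of_legalMove hmove (hTcard ▸ hcard) hd₁ hd₂ hd⟩
    obtain ⟨-, -, -, -, -, -, -, hT'⟩ := hmove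
    exact hT'
  obtain ⟨a, ha⟩ := exists_ne i
  obtain ⟨T, ⟨hT, -, d₁, d₂, hd, hd₁, hd₂⟩, h0⟩ :=
    hS.exists_mem_of_invariant P ⟨hS.1, rfl, j₁, j₂, hj, h₁, h₂⟩ hP (a, ⟨0, hs⟩)
  exact Nat.not_lt_zero _ (mem_uIoo_of_fst_ne hT hd₁ hd₂ hd h0 ha).1

end

variable {r s : ℕ}

def sweepIndex (r s : ℕ) : Fin r × Fin s ≃ Fin (s * r) :=
  (Equiv.prodComm _ _).trans finProdFinEquiv

lemma sweepIndex_apply (x : Fin r × Fin s) : (sweepIndex r s x : ℕ) = x.1 + r * x.2 := rfl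

lemma sweepIndex_symm_apply (n : Fin (s * r)) :
    (((sweepIndex r s).symm n).1 : ℕ) = n % r ∧ (((sweepIndex r s).symm n).2 : ℕ) = n / r := by
  simp [sweepIndex]

/-- The configuration at time `t` of the sweep: the robots occupy the vertices numbered
`t, …, t + r - 1` by `sweepIndex`, one in each fiber; the move from time `t` to `t + 1` takes the
robot on vertex number `t` one step up its fiber, to vertex number `t + r`. -/
def window (r s t : ℕ) : Set (Fin r × Fin s) := {x | (sweepIndex r s x : ℕ) ∈ Set.Ico t (t + r)}

lemma injOn_fst_window (t : ℕ) : Set.InjOn Prod.fst (window r s t) := by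
  rintro ⟨a, c⟩ hx ⟨b, d⟩ hy (rfl : a = b)
  simp only [window, Set.mem_ofPred_eq, Set.mem_Ico, sweepIndex_apply] at hx hy
  suffices (c : ℕ) = d by simp [Fin.ext this]
  by_contra hcd
  rcases Nat.lt_or_gt_of_ne hcd with h | h <;>
  · have := Nat.mul_le_mul_left r h
    rw [Nat.mul_succ] at this
    omega

lemma ncard_window_zero (hs : 0 < s) : (window r s 0).ncard = r := by
  have : window r s 0 = Set.range fun i => (i, ⟨0, hs⟩) := by
    ext ⟨a, c⟩
    simp only [window, Set.mem_ofPred_eq, Set.mem_Ico, sweepIndex_apply, Set.mem_range,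
      Prod.mk.injEq, exists_eq_left, zero_add, zero_le, true_and]
    rw [Fin.ext_iff, Fin.val_mk, eq_comm]
    constructor
    · intro h
      by_contra hc
      have := Nat.le_mul_of_pos_right r (Nat.pos_of_ne_zero hc)
      omega
    · intro hc
      simp [hc]
  rw [this, Set.ncard_range_of_injective fun i j h => (Prod.mk.inj h).1, Nat.card_fin]

lemma legalMove_window {t : ℕ} (ht : t + r < s * r) :
    LegalMove ((⊤ : SimpleGraph (Fin r)) □ pathGraph s) (window r s t) (window r s (t + 1)) := by
  have hr : 0 < r := Nat.pos_of_ne_zero (by rintro rfl; simp at ht)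
  set u := (sweepIndex r s).symm ⟨t, by omega⟩
  set v := (sweepIndex r s).symm ⟨t + r, ht⟩
  have hu : (sweepIndex r s u : ℕ) = t := by simp [u]
  have hv : (sweepIndex r s v : ℕ) = t + r := by simp [v]
  refine ⟨isGPSet_of_injOn_fst (injOn_fst_window t), u, ?_, v, ?_, ?_, ?_,
    isGPSet_of_injOn_fst (injOn_fst_window (t + 1))⟩
  · simp [window, hu, hr]
  · simp [window, hv]
  · obtain ⟨hu₁, hu₂⟩ := sweepIndex_symm_apply (r := r) (s := s) ⟨t, by omega⟩
    obtain ⟨hv₁, hv₂⟩ := sweepIndex_symm_apply (r := r) (s := s) ⟨t + r, ht⟩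
    refine boxProd_adj.2 (Or.inr ⟨pathGraph_adj.2 (Or.inl ?_), Fin.ext ?_⟩)
    · rw [hu₂, hv₂, Nat.add_div_right t hr]
    · rw [hu₁, hv₁, Nat.add_mod_right]
  · ext x
    have hxu : x = u ↔ (sweepIndex r s x : ℕ) = t := by
      rw [← (sweepIndex r s).injective.eq_iff, Fin.ext_iff, hu]
    have hxv : x = v ↔ (sweepIndex r s x : ℕ) = t + r := by
      rw [← (sweepIndex r s).injective.eq_iff, Fin.ext_iff, hv]
    simp only [window, Set.mem_ofPred_eq, Set.mem_Ico, Set.mem_insert_iff, Set.mem_sdiff,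
      Set.mem_singleton_iff, hxu, hxv]
    omega

lemma exists_mem_window (x : Fin r × Fin s) : ∃ t ≤ s * r - r, x ∈ window r s t := by
  have := (sweepIndex r s x).isLt
  have := x.1.pos
  by_cases hx : (sweepIndex r s x : ℕ) ≤ s * r - r
  · exact ⟨_, hx, by simp [window, Set.mem_Ico]; omega⟩
  · exact ⟨_, le_rfl, by simp [window, Set.mem_Ico]; omega⟩

lemma isMobileGPSet_window_zero :
    IsMobileGPSet ((⊤ : SimpleGraph (Fin r)) □ pathGraph s) (window r s 0) := by
  refine ⟨isGPSet_of_injOn_fst (injOn_fst_window 0), s * r - r, window r s, rfl,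
    fun t ht => legalMove_window (by omega), ?_⟩
  ext x
  obtain ⟨t, ht, hx⟩ := exists_mem_window x
  simpa using ⟨t, ht, hx⟩

end CompleteBoxPath

theorem mob_completeGraph_boxProd_pathGraph (r s : ℕ) (hr : 2 ≤ r) (hs : 2 ≤ s) :
    mob ((⊤ : SimpleGraph (Fin r)) □ pathGraph s) = r := by
  have : Nontrivial (Fin r) := Fin.nontrivial_iff_two_le.2 hr
  have hcard := CompleteBoxPath.ncard_window_zero (r := r) (s := s) (by omega)
  rw [mob_eq_of_isMobileGPSet CompleteBoxPath.isMobileGPSet_window_zero, hcard]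
  intro T hT
  simpa [hcard] using CompleteBoxPath.ncard_le_of_isMobileGPSet (by omega) hT
end

section
/- Let n ≥ 3 and m ≥ 3, with V(K_n) = [n] and V(K_m) = [m], and let X be a general position set of K_n □ K_m of maximum cardinality (which equals n + m − 2). Then there exist i ∈ [n] and j ∈ [m] such that X = (([n] × {j}) ∪ ({i} × [m])) \ {(i,j)}. -/
open SimpleGraph

section AuxGP
variable {α β : Type*}

variable {α β : Type*}

lemma KG_adj {x y : α × β} :
    ((⊤ : SimpleGraph α) □ (⊤ : SimpleGraph β)).Adj x y ↔
      (x.1 ≠ y.1 ∧ x.2 = y.2) ∨ (x.2 ≠ y.2 ∧ x.1 = y.1) := by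
  simp [boxProd_adj]

lemma KG_dist_le_two (u v : α × β) :
    ((⊤ : SimpleGraph α) □ (⊤ : SimpleGraph β)).dist u v ≤ 2 := by
  set G := ((⊤ : SimpleGraph α) □ (⊤ : SimpleGraph β)) with hG
  by_cases h1 : u.1 = v.1
  · by_cases h2 : u.2 = v.2
    · have : u = v := Prod.ext h1 h2
      subst this; simp [SimpleGraph.dist_self]
    · have hadj : G.Adj u v := KG_adj.mpr (Or.inr ⟨h2, h1⟩)
      calc G.dist u v ≤ (hadj.toWalk).length := dist_le _
        _ ≤ 2 := by simp
  · by_cases h2 : u.2 = v.2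
    · have hadj : G.Adj u v := KG_adj.mpr (Or.inl ⟨h1, h2⟩)
      calc G.dist u v ≤ (hadj.toWalk).length := dist_le _
        _ ≤ 2 := by simp
    · have ha1 : G.Adj u (u.1, v.2) := KG_adj.mpr (Or.inr ⟨by simpa using h2, rfl⟩)
      have ha2 : G.Adj (u.1, v.2) v := KG_adj.mpr (Or.inl ⟨by simpa using h1, rfl⟩)
      calc G.dist u v ≤ (Walk.cons ha1 (Walk.cons ha2 Walk.nil)).length := dist_le _
        _ ≤ 2 := by simp

lemma KG_dist_eq_two {u v : α × β} (h1 : u.1 ≠ v.1) (h2 : u.2 ≠ v.2) :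
    ((⊤ : SimpleGraph α) □ (⊤ : SimpleGraph β)).dist u v = 2 := by
  set G := ((⊤ : SimpleGraph α) □ (⊤ : SimpleGraph β)) with hG
  have hne : u ≠ v := fun h => h1 (by rw [h])
  have hnadj : ¬ G.Adj u v := by
    rw [KG_adj]; push_neg; exact ⟨fun _ => h2, fun _ => h1⟩
  have hle := KG_dist_le_two (α := α) (β := β) u v
  have h0 : G.dist u v ≠ 0 := by
    rw [ne_eq, SimpleGraph.dist_eq_zero_iff_eq_or_not_reachable]
    push_neg
    refine ⟨hne, ?_⟩
    have ha1 : G.Adj u (u.1, v.2) := KG_adj.mpr (Or.inr ⟨by simpa using h2, rfl⟩)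
    have ha2 : G.Adj (u.1, v.2) v := KG_adj.mpr (Or.inl ⟨by simpa using h1, rfl⟩)
    exact ⟨Walk.cons ha1 (Walk.cons ha2 Walk.nil)⟩
  have hone : G.dist u v ≠ 1 := by
    rw [ne_eq, SimpleGraph.dist_eq_one_iff_adj]; exact hnadj
  rw [hG] at *
  omega

lemma corner_not_mem {X : Set (α × β)}
    (hX : IsGPSet ((⊤ : SimpleGraph α) □ (⊤ : SimpleGraph β)) X)
    {u v : α × β} (hu : u ∈ X) (hv : v ∈ X) (h1 : u.1 ≠ v.1) (h2 : u.2 ≠ v.2) :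
    (u.1, v.2) ∉ X := by
  intro hc
  set G := ((⊤ : SimpleGraph α) □ (⊤ : SimpleGraph β)) with hG
  have ha1 : G.Adj u (u.1, v.2) := KG_adj.mpr (Or.inr ⟨by simpa using h2, rfl⟩)
  have ha2 : G.Adj (u.1, v.2) v := KG_adj.mpr (Or.inl ⟨by simpa using h1, rfl⟩)
  set p : G.Walk u v := Walk.cons ha1 (Walk.cons ha2 Walk.nil) with hp
  have hune : u ≠ (u.1, v.2) := fun h => h2 (by rw [h])
  have hunv : u ≠ v := fun h => h1 (by rw [h])
  have hcv : (u.1, v.2) ≠ v := fun h => h1 (by rw [← h])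
  have hpath : p.IsPath := by
    rw [Walk.isPath_def, hp]
    simp [hune, hunv, hcv]
  have hlen : p.length = G.dist u v := by
    rw [KG_dist_eq_two h1 h2, hp]; simp
  have hmem : (u.1, v.2) ∈ p.support := by rw [hp]; simp
  rcases hX u hu v hv p hpath hlen (u.1, v.2) hmem hc with h | h
  · exact hune h.symm
  · exact hcv h

lemma canonical_noCorner {i : α} {j : β} {u v c : α × β}
    (hu : u ∈ ((Set.univ ×ˢ {j}) ∪ ({i} ×ˢ Set.univ)) \ {(i, j)})
    (hv : v ∈ ((Set.univ ×ˢ {j}) ∪ ({i} ×ˢ Set.univ)) \ {(i, j)})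
    (h1 : u.1 ≠ v.1) (h2 : u.2 ≠ v.2)
    (hc : c = (u.1, v.2) ∨ c = (v.1, u.2)) :
    c ∉ ((Set.univ ×ˢ {j}) ∪ ({i} ×ˢ Set.univ)) \ {(i, j)} := by
  intro hcS
  simp only [Set.mem_diff, Set.mem_union, Set.mem_prod, Set.mem_singleton_iff,
    Set.mem_univ, true_and, and_true, Prod.ext_iff] at hu hv hcS
  obtain ⟨hu1, hu2⟩ := hu
  obtain ⟨hv1, hv2⟩ := hv
  obtain ⟨hc1, hc2⟩ := hcS
  rcases hc with rfl | rfl <;>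
  · simp only [Prod.ext_iff] at hc2 ⊢
    rcases hu1 with h | h <;> rcases hv1 with h' | h' <;>
      rcases hc1 with h'' | h'' <;>
      first
        | (exact h1 (by rw [h, h']))
        | (exact h2 (by rw [h, h']))
        | (exact h2 (by rw [h, h'']))
        | (exact h1 (by rw [h', h'']))
        | (exact h2 (by rw [h', h'']))
        | (exact h1 (by rw [h, h'']))
        | (exact hu2 ⟨h'', h⟩)
        | (exact hv2 ⟨h'', h'⟩)
        | (exact hu2 ⟨h, h''⟩)
        | (exact hv2 ⟨h', h''⟩)
        | (exact hc2 ⟨h'', h⟩)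
        | (exact hc2 ⟨h, h''⟩)
        | (exact hc2 ⟨h'', h'⟩)
        | (exact hc2 ⟨h', h''⟩)

lemma canonical_gp (i : α) (j : β) :
    IsGPSet ((⊤ : SimpleGraph α) □ (⊤ : SimpleGraph β))
      (((Set.univ ×ˢ {j}) ∪ ({i} ×ˢ Set.univ)) \ {(i, j)}) := by
  intro u hu v hv p hpath hlen w hw hwS
  cases p with
  | nil => left; simpa using hw
  | cons h q =>
    rename_i x
    cases q with
    | nil =>
      simp only [Walk.support_cons, Walk.support_nil, List.mem_cons,
        List.mem_singleton, List.not_mem_nil, or_false] at hw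
      tauto
    | cons h' q' =>
      rename_i y
      cases q' with
      | cons h'' q'' =>
        exfalso
        have hd := KG_dist_le_two (α := α) (β := β) u v
        simp only [Walk.length_cons] at hlen
        omega
      | nil =>
        -- p = u - x - v, length 2
        have hdist : ((⊤ : SimpleGraph α) □ (⊤ : SimpleGraph β)).dist u v = 2 := by
          rw [← hlen]; simp
        have hne : u ≠ v := by
          intro e; subst e; rw [SimpleGraph.dist_self] at hdist; omega
        have hnadj : ¬ ((⊤ : SimpleGraph α) □ (⊤ : SimpleGraph β)).Adj u v := by
          intro a
          rw [← SimpleGraph.dist_eq_one_iff_adj] at a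
          omega
        rw [KG_adj] at hnadj
        push_neg at hnadj
        obtain ⟨f1, f2⟩ := hnadj
        have h1 : u.1 ≠ v.1 := by
          intro e
          have h2' : u.2 = v.2 := not_not.mp (fun hh => (f2 hh) e)
          exact hne (Prod.ext e h2')
        have h2 : u.2 ≠ v.2 := f1 h1
        simp only [Walk.support_cons, Walk.support_nil, List.mem_cons,
          List.mem_singleton, List.not_mem_nil, or_false] at hw
        rcases hw with rfl | rfl | rfl
        · exact Or.inl rfl
        · -- w = x, middle vertex
          exfalso
          rw [KG_adj] at h h'
          have hx : w = (u.1, v.2) ∨ w = (v.1, u.2) := by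
            rcases h with ⟨hne1, he2⟩ | ⟨hne2, he1⟩
            · -- w.2 = u.2, w.1 ≠ u.1
              rcases h' with ⟨hne1', he2'⟩ | ⟨hne2', he1'⟩
              · exact absurd (he2.trans he2') h2
              · exact Or.inr (Prod.ext he1' he2.symm)
            · rcases h' with ⟨hne1', he2'⟩ | ⟨hne2', he1'⟩
              · exact Or.inl (Prod.ext he1.symm he2')
              · exact absurd (he1.trans he1') h1
          exact canonical_noCorner hu hv h1 h2 hx hwS
        · exact Or.inr rfl

lemma ncard_compl_singleton' {γ : Type*} [Fintype γ] (x : γ) :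
    ({x}ᶜ : Set γ).ncard = Fintype.card γ - 1 := by
  rw [Set.compl_eq_univ_diff, Set.ncard_diff (Set.subset_univ _), Set.ncard_univ,
    Set.ncard_singleton, Nat.card_eq_fintype_card]

lemma canonical_ncard {n m : ℕ} (i : Fin n) (j : Fin m) (hn : 3 ≤ n) (hm : 3 ≤ m) :
    ((((Set.univ ×ˢ {j}) ∪ ({i} ×ˢ Set.univ)) \ {(i, j)}) : Set (Fin n × Fin m)).ncard
      = n + m - 2 := by
  have hrw : (((Set.univ ×ˢ {j}) ∪ ({i} ×ˢ Set.univ)) \ {(i, j)} : Set (Fin n × Fin m))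
      = ((fun a => (a, j)) '' {i}ᶜ) ∪ ((fun b => (i, b)) '' {j}ᶜ) := by
    ext ⟨a, b⟩
    simp only [Set.mem_diff, Set.mem_union, Set.mem_prod, Set.mem_singleton_iff,
      Set.mem_univ, true_and, and_true, Set.mem_image, Set.mem_compl_iff,
      Prod.ext_iff]
    constructor
    · rintro ⟨h1 | h1, h2⟩
      · exact Or.inl ⟨a, fun ha => h2 ⟨ha, h1⟩, rfl, h1.symm⟩
      · exact Or.inr ⟨b, fun hb => h2 ⟨h1, hb⟩, h1.symm, rfl⟩
    · rintro (⟨c, hc, rfl, rfl⟩ | ⟨c, hc, rfl, rfl⟩)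
      · exact ⟨Or.inl rfl, fun ⟨ha, _⟩ => hc ha⟩
      · exact ⟨Or.inr rfl, fun ⟨_, hb⟩ => hc hb⟩
  rw [hrw, Set.ncard_union_eq, Set.ncard_image_of_injOn, Set.ncard_image_of_injOn,
    ncard_compl_singleton', ncard_compl_singleton']
  · simp only [Fintype.card_fin]; omega
  · exact fun x _ y _ h => congrArg Prod.snd h
  · exact fun x _ y _ h => congrArg Prod.fst h
  · rw [Set.disjoint_left]
    rintro p ⟨c, hc, rfl⟩ ⟨d, hd, he⟩
    exact hc (congrArg Prod.fst he).symm

private theorem main_aux (n m : ℕ) (hn : 3 ≤ n) (hm : 3 ≤ m)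
    (X : Set (Fin n × Fin m))
    (hX : IsGPSet ((⊤ : SimpleGraph (Fin n)) □ (⊤ : SimpleGraph (Fin m))) X)
    (hmax : ∀ Y : Set (Fin n × Fin m),
      IsGPSet ((⊤ : SimpleGraph (Fin n)) □ (⊤ : SimpleGraph (Fin m))) Y →
      Y.ncard ≤ X.ncard) :
    X.ncard = n + m - 2 ∧
    ∃ (i : Fin n) (j : Fin m),
      X = ((Set.univ ×ˢ {j}) ∪ ({i} ×ˢ Set.univ)) \ {(i, j)} := by
  classical
  have hn0 : 0 < n := by omega
  have hm0 : 0 < m := by omega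
  -- lower bound
  have hl : n + m - 2 ≤ X.ncard := by
    have h := hmax _ (canonical_gp (⟨0, hn0⟩ : Fin n) (⟨0, hm0⟩ : Fin m))
    rwa [canonical_ncard _ _ hn hm] at h
  set A : Set (Fin n × Fin m) := {p | p ∈ X ∧ ∃ q ∈ X, q ≠ p ∧ q.1 = p.1} with hA
  set B : Set (Fin n × Fin m) := X \ A with hB
  have hAX : A ⊆ X := fun p hp => hp.1
  have hBX : B ⊆ X := fun p hp => hp.1
  have hXAB : X = A ∪ B := (Set.union_diff_cancel hAX).symm
  have hdisj : Disjoint A B := Set.disjoint_sdiff_right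
  -- A points have no column mate
  have noCol : ∀ p ∈ A, ∀ r ∈ X, r ≠ p → r.2 ≠ p.2 := by
    rintro p ⟨hpX, q, hqX, hqne, hq1⟩ r hrX hrne hr2
    have hr1 : r.1 ≠ p.1 := fun h => hrne (Prod.ext h hr2)
    have hq2 : q.2 ≠ p.2 := fun h => hqne (Prod.ext hq1 h)
    have h1 : q.1 ≠ r.1 := by rw [hq1]; exact fun h => hr1 h.symm
    have h2 : q.2 ≠ r.2 := by rw [hr2]; exact hq2
    have := corner_not_mem hX hqX hrX h1 h2
    rw [hq1, hr2] at this
    exact this hpX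
  -- B points have no row mate
  have noRow : ∀ p ∈ B, ∀ r ∈ X, r ≠ p → r.1 ≠ p.1 := by
    rintro p ⟨hpX, hpA⟩ r hrX hrne hr1
    exact hpA ⟨hpX, r, hrX, hrne, hr1⟩
  have injA : Set.InjOn Prod.snd A := by
    intro a ha a' ha' h
    by_contra hne
    exact noCol a' ha' a (hAX ha) hne h
  have injB : Set.InjOn Prod.fst B := by
    intro b hb b' hb' h
    by_contra hne
    exact noRow b' hb' b (hBX hb) hne h
  -- nonemptiness
  have hAne : A.Nonempty := by
    rw [Set.nonempty_iff_ne_empty]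
    intro he
    have hXB : X = B := by rw [hXAB, he, Set.empty_union]
    have : X.ncard ≤ n := by
      calc X.ncard = B.ncard := by rw [hXB]
        _ = (Prod.fst '' B).ncard := (Set.ncard_image_of_injOn injB).symm
        _ ≤ (Set.univ : Set (Fin n)).ncard := Set.ncard_le_ncard (Set.subset_univ _)
        _ = n := by rw [Set.ncard_univ, Nat.card_eq_fintype_card, Fintype.card_fin]
    omega
  have hBne : B.Nonempty := by
    rw [Set.nonempty_iff_ne_empty]
    intro he
    have hXA : X = A := by rw [hXAB, he, Set.union_empty]
    have : X.ncard ≤ m := by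
      calc X.ncard = A.ncard := by rw [hXA]
        _ = (Prod.snd '' A).ncard := (Set.ncard_image_of_injOn injA).symm
        _ ≤ (Set.univ : Set (Fin m)).ncard := Set.ncard_le_ncard (Set.subset_univ _)
        _ = m := by rw [Set.ncard_univ, Nat.card_eq_fintype_card, Fintype.card_fin]
    omega
  obtain ⟨a0, ha0⟩ := hAne
  obtain ⟨b0, hb0⟩ := hBne
  -- cross constraints
  have hAB2 : ∀ a ∈ A, ∀ b ∈ B, a.2 ≠ b.2 := by
    intro a ha b hb h
    have hne : b ≠ a := fun e => (Set.disjoint_right.mp hdisj hb) (e ▸ ha)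
    exact noCol a ha b (hBX hb) hne h.symm
  have hBA1 : ∀ b ∈ B, ∀ a ∈ A, b.1 ≠ a.1 := by
    intro b hb a ha h
    have hne : a ≠ b := fun e => (Set.disjoint_left.mp hdisj ha) (e ▸ hb)
    exact noRow b hb a (hAX ha) hne h.symm
  -- cardinality bounds
  have himA : ∀ b ∈ B, Prod.snd '' A ⊆ {b.2}ᶜ := by
    rintro b hb x ⟨a, ha, rfl⟩
    exact fun h => hAB2 a ha b hb h
  have himB : ∀ a ∈ A, Prod.fst '' B ⊆ {a.1}ᶜ := by
    rintro a ha x ⟨b, hb, rfl⟩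
    exact fun h => hBA1 b hb a ha h
  have hcompl_m : ∀ x : Fin m, ({x}ᶜ : Set (Fin m)).ncard = m - 1 := by
    intro x; rw [ncard_compl_singleton', Fintype.card_fin]
  have hcompl_n : ∀ x : Fin n, ({x}ᶜ : Set (Fin n)).ncard = n - 1 := by
    intro x; rw [ncard_compl_singleton', Fintype.card_fin]
  have hAcard : A.ncard ≤ m - 1 := by
    calc A.ncard = (Prod.snd '' A).ncard := (Set.ncard_image_of_injOn injA).symm
      _ ≤ ({b0.2}ᶜ : Set (Fin m)).ncard := Set.ncard_le_ncard (himA b0 hb0)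
      _ = m - 1 := hcompl_m _
  have hBcard : B.ncard ≤ n - 1 := by
    calc B.ncard = (Prod.fst '' B).ncard := (Set.ncard_image_of_injOn injB).symm
      _ ≤ ({a0.1}ᶜ : Set (Fin n)).ncard := Set.ncard_le_ncard (himB a0 ha0)
      _ = n - 1 := hcompl_n _
  have hsum : X.ncard = A.ncard + B.ncard := by
    rw [hXAB, Set.ncard_union_eq hdisj]
  have hXcard : X.ncard = n + m - 2 := by omega
  have hAm : A.ncard = m - 1 := by omega
  have hBn : B.ncard = n - 1 := by omega
  -- image equalities
  have himAeq : ∀ b ∈ B, Prod.snd '' A = ({b.2}ᶜ : Set (Fin m)) := by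
    intro b hb
    refine Set.eq_of_subset_of_ncard_le (himA b hb) ?_ (Set.toFinite _)
    rw [hcompl_m, Set.ncard_image_of_injOn injA, hAm]
  have himBeq : ∀ a ∈ A, Prod.fst '' B = ({a.1}ᶜ : Set (Fin n)) := by
    intro a ha
    refine Set.eq_of_subset_of_ncard_le (himB a ha) ?_ (Set.toFinite _)
    rw [hcompl_n, Set.ncard_image_of_injOn injB, hBn]
  have hi : ∃ i : Fin n, i = a0.1 := ⟨a0.1, rfl⟩
  obtain ⟨i, hi⟩ := hi
  have hj : ∃ j : Fin m, j = b0.2 := ⟨b0.2, rfl⟩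
  obtain ⟨j, hj⟩ := hj
  have hA1 : ∀ a ∈ A, a.1 = i := by
    intro a ha
    have h1 := himBeq a ha
    have h2 := himBeq a0 ha0
    rw [h1] at h2
    have := compl_injective h2
    rw [hi]; exact Set.singleton_eq_singleton_iff.mp this
  have hB2 : ∀ b ∈ B, b.2 = j := by
    intro b hb
    have h1 := himAeq b hb
    have h2 := himAeq b0 hb0
    rw [h1] at h2
    have := compl_injective h2
    rw [hj]; exact Set.singleton_eq_singleton_iff.mp this
  refine ⟨hXcard, i, j, ?_⟩
  ext p
  simp only [Set.mem_diff, Set.mem_union, Set.mem_prod, Set.mem_singleton_iff,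
    Set.mem_univ, true_and, and_true, Prod.ext_iff]
  constructor
  · intro hp
    rw [hXAB] at hp
    rcases hp with hp | hp
    · have h1 : p.1 = i := hA1 p hp
      have h2 : p.2 ≠ j := hj ▸ hAB2 p hp b0 hb0
      exact ⟨Or.inr h1, fun ⟨_, e2⟩ => h2 e2⟩
    · have h2 : p.2 = j := hB2 p hp
      have h1 : p.1 ≠ i := hi ▸ hBA1 p hp a0 ha0
      exact ⟨Or.inl h2, fun ⟨e1, _⟩ => h1 e1⟩
  · rintro ⟨h1 | h1, h2⟩
    · -- p.2 = j, so p.1 ≠ i, p comes from B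
      have hp1 : p.1 ≠ i := fun e => h2 ⟨e, h1⟩
      have : p.1 ∈ Prod.fst '' B := by
        rw [himBeq a0 ha0, ← hi]; exact hp1
      obtain ⟨b, hb, hbe⟩ := this
      have : b = p := Prod.ext hbe ((hB2 b hb).trans h1.symm)
      rw [hXAB]; exact Or.inr (this ▸ hb)
    · -- p.1 = i, p.2 ≠ j, p comes from A
      have hp2 : p.2 ≠ j := fun e => h2 ⟨h1, e⟩
      have : p.2 ∈ Prod.snd '' A := by
        rw [himAeq b0 hb0, ← hj]; exact hp2
      obtain ⟨a, ha, hae⟩ := this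
      have : a = p := Prod.ext ((hA1 a ha).trans h1.symm) hae
      rw [hXAB]; exact Or.inl (this ▸ ha)

end AuxGP

theorem gpSet_hamming_canonical (n m : ℕ) (hn : 3 ≤ n) (hm : 3 ≤ m)
    (X : Set (Fin n × Fin m))
    (hX : IsGPSet ((⊤ : SimpleGraph (Fin n)) □ (⊤ : SimpleGraph (Fin m))) X)
    (hmax : ∀ Y : Set (Fin n × Fin m),
      IsGPSet ((⊤ : SimpleGraph (Fin n)) □ (⊤ : SimpleGraph (Fin m))) Y →
      Y.ncard ≤ X.ncard) :
    X.ncard = n + m - 2 ∧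
    ∃ (i : Fin n) (j : Fin m),
      X = ((Set.univ ×ˢ {j}) ∪ ({i} ×ˢ Set.univ)) \ {(i, j)} := by
  exact main_aux n m hn hm X hX hmax
end
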